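/- For every graph G with a d-clique lift ℳ, the graph G^ℳ is a 1-shallow minor of G ∘ \overline{K_{d+1}}. -/

import Mathlib

open SimpleGraph

variable {V W : Type}

/-- The strong product of two simple graphs. -/
def strongProd (G : SimpleGraph V) (H : SimpleGraph W) : SimpleGraph (V × W) where
  Adj a b := a ≠ b ∧ (a.1 = b.1 ∨ G.Adj a.1 b.1) ∧ (a.2 = b.2 ∨ H.Adj a.2 b.2)
  symm := by
    constructor
    rintro a b ⟨hne, h1, h2⟩
    exact ⟨hne.symm, by tauto, by tauto⟩
  loopless := ⟨fun a h => h.1 rfl⟩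

infixl:70 " ⊠ " => strongProd

/-- The lexicographic product of two simple graphs. -/
def lexProd (G : SimpleGraph V) (H : SimpleGraph W) : SimpleGraph (V × W) where
  Adj a b := G.Adj a.1 b.1 ∨ (a.1 = b.1 ∧ H.Adj a.2 b.2)
  symm := by
    constructor
    rintro a b (h | ⟨h, h'⟩)
    · exact Or.inl h.symm
    · exact Or.inr ⟨h.symm, h'.symm⟩
  loopless := by
    constructor
    rintro a (h | ⟨_, h⟩)
    · exact G.irrefl h
    · exact H.irrefl h

/-- `G` is contained in `H`: `G` is isomorphic to a subgraph of `H`. -/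
def Contains (G : SimpleGraph V) (H : SimpleGraph W) : Prop :=
  ∃ f : V → W, Function.Injective f ∧ ∀ ⦃u v⦄, G.Adj u v → H.Adj (f u) (f v)

/-- `(T, B)` is a tree-decomposition of `G`. -/
def IsTreeDecomp {ι : Type} (G : SimpleGraph V) (T : SimpleGraph ι) (B : ι → Set V) : Prop :=
  T.IsTree ∧
  (∀ ⦃u v⦄, G.Adj u v → ∃ i, u ∈ B i ∧ v ∈ B i) ∧
  (∀ v : V, (T.induce {i | v ∈ B i}).Connected)

/-- The treewidth of `G` is at most `t`. -/
def TreewidthLE (G : SimpleGraph V) (t : ℕ) : Prop :=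
  ∃ (ι : Type) (T : SimpleGraph ι) (B : ι → Set V),
    IsTreeDecomp G T B ∧ ∀ i, (B i).Finite ∧ (B i).ncard ≤ t + 1

/-- The row treewidth of `G` is at most `t`: `G` is contained in `H ⊠ P`
for some graph `H` of treewidth at most `t` and some path `P`. -/
def RowTreewidthLE (G : SimpleGraph V) (t : ℕ) : Prop :=
  ∃ (ι : Type) (H : SimpleGraph ι) (n : ℕ),
    TreewidthLE H t ∧ Contains G (H ⊠ pathGraph n)

/-- `μ` is a model of an `r`-shallow minor `H` in `G`: branch sets are connected,
pairwise disjoint, of radius at most `r`, with adjacent branch sets for each edge of `H`. -/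
def IsShallowMinorModel (H : SimpleGraph W) (G : SimpleGraph V) (r : ℕ) (μ : W → Set V) : Prop :=
  (∀ w, (G.induce (μ w)).Connected) ∧
  (∀ w, ∃ c : μ w, ∀ u : μ w, (G.induce (μ w)).dist c u ≤ r) ∧
  (Pairwise fun w w' => Disjoint (μ w) (μ w')) ∧
  (∀ ⦃w w'⦄, H.Adj w w' → ∃ u ∈ μ w, ∃ v ∈ μ w', G.Adj u v)

/-- `H` is an `r`-shallow minor of `G`. -/
def ShallowMinor (H : SimpleGraph W) (G : SimpleGraph V) (r : ℕ) : Prop :=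
  ∃ μ : W → Set V, IsShallowMinorModel H G r μ

/-- `H` is an `(m/2)`-shallow topological minor of `G`: a subgraph of `G` is an
`m`-subdivision of `H`, i.e. each edge of `H` is replaced by a path of length at most `m+1`,
and these paths are internally disjoint. -/
def ShallowTopMinor (H : SimpleGraph W) (G : SimpleGraph V) (m : ℕ) : Prop :=
  ∃ f : W → V, Function.Injective f ∧
  ∃ P : ∀ ⦃u v⦄, H.Adj u v → G.Walk (f u) (f v),
    (∀ ⦃u v⦄ (h : H.Adj u v), (P h).IsPath ∧ (P h).length ≤ m + 1 ∧
      ∀ x ∈ (P h).support, x ∈ Set.range f → (x = f u ∨ x = f v)) ∧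
    (∀ ⦃u v x y⦄ (h₁ : H.Adj u v) (h₂ : H.Adj x y), s(u,v) ≠ s(x,y) →
      ∀ z ∈ (P h₁).support, z ∈ (P h₂).support →
        (z = f u ∨ z = f v) ∧ (z = f x ∨ z = f y))

/-- The `s`-th power of a graph: vertices at distance at most `s` are adjacent. -/
def powG (G : SimpleGraph V) (s : ℕ) : SimpleGraph V where
  Adj u v := u ≠ v ∧ ∃ p : G.Walk u v, p.length ≤ s
  symm := by
    constructor
    rintro u v ⟨h, p, hp⟩
    exact ⟨h.symm, p.reverse, by simpa using hp⟩
  loopless := ⟨fun v h => h.1 rfl⟩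

/-- The maximum degree of `G` is at most `d`. -/
def MaxDegLE (G : SimpleGraph V) (d : ℕ) : Prop :=
  ∀ v, (G.neighborSet v).Finite ∧ (G.neighborSet v).ncard ≤ d
open SimpleGraph
variable {V W : Type}

/-- `R(G,⪯,v,s)`: vertices `w ⪯ v` reachable from `v` by a path of length at most `s`
whose internal vertices are all `≻ v`. -/
def RSet (G : SimpleGraph V) (le : V → V → Prop) (v : V) (s : ℕ) : Set V :=
  {w | le w v ∧ ∃ p : G.Walk v w, p.length ≤ s ∧
    ∀ u ∈ p.support, u ≠ v → u ≠ w → (le v u ∧ u ≠ v)}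

/-- `Q(G,⪯,v,s)`: vertices `w ⪯ v` reachable from `v` by a path of length at most `s`
whose internal vertices are all `≻ w`. -/
def QSet (G : SimpleGraph V) (le : V → V → Prop) (v : V) (s : ℕ) : Set V :=
  {w | le w v ∧ ∃ p : G.Walk v w, p.length ≤ s ∧
    ∀ u ∈ p.support, u ≠ v → u ≠ w → (le w u ∧ u ≠ w)}

/-- The `s`-strong colouring number of `G` is at most `c`. -/
def ScolLE (G : SimpleGraph V) (s : ℕ) (c : ℕ) : Prop :=
  ∃ le : V → V → Prop, IsLinearOrder V le ∧
    ∀ v, (RSet G le v s).Finite ∧ (RSet G le v s).ncard ≤ c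

/-- The `s`-weak colouring number of `G` is at most `c`. -/
def WcolLE (G : SimpleGraph V) (s : ℕ) (c : ℕ) : Prop :=
  ∃ le : V → V → Prop, IsLinearOrder V le ∧
    ∀ v, (QSet G le v s).Finite ∧ (QSet G le v s).ncard ≤ c

/-- The queue-number of `G` is at most `q`: there is a linear order of `V(G)` and an
assignment of edges to `q` queues such that no two edges in the same queue nest. -/
def QueueLE (G : SimpleGraph V) (q : ℕ) : Prop :=
  ∃ le : V → V → Prop, IsLinearOrder V le ∧
    ∃ σ : V → V → ℕ,
      (∀ u v, σ u v = σ v u) ∧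
      (∀ ⦃u v⦄, G.Adj u v → σ u v < q) ∧
      (∀ a b c d, G.Adj a b → G.Adj c d → σ a b = σ c d →
        (le a b ∧ a ≠ b) → (le c d ∧ c ≠ d) →
        ¬((le a c ∧ a ≠ c) ∧ (le d b ∧ d ≠ b)))

/-- A `(k,d)`-shortcut system for `G`: a set of paths of length at most `k` such that
every vertex is an internal vertex of at most `d` of the paths. -/
structure ShortcutSystem (G : SimpleGraph V) (k d : ℕ) where
  paths : Set ((u : V) × (v : V) × G.Walk u v)
  isPath : ∀ p ∈ paths, p.2.2.IsPath
  lengthLE : ∀ p ∈ paths, p.2.2.length ≤ k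
  internal : ∀ w : V,
    {p ∈ paths | w ∈ p.2.2.support ∧ w ≠ p.1 ∧ w ≠ p.2.1}.Finite ∧
    {p ∈ paths | w ∈ p.2.2.support ∧ w ≠ p.1 ∧ w ≠ p.2.1}.ncard ≤ d

/-- The supergraph `G^𝒫` of `G` obtained by adding an edge `uv` whenever `𝒫`
contains a `(u,v)`-path. -/
def shortcutGraph (G : SimpleGraph V) {k d : ℕ} (P : ShortcutSystem G k d) : SimpleGraph V where
  Adj u v := u ≠ v ∧ (G.Adj u v ∨ ∃ p ∈ P.paths, (p.1 = u ∧ p.2.1 = v) ∨ (p.1 = v ∧ p.2.1 = u))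
  symm := by
    constructor
    rintro u v ⟨h, h'⟩
    refine ⟨h.symm, ?_⟩
    rcases h' with h' | ⟨p, hp, h'⟩
    · exact Or.inl h'.symm
    · exact Or.inr ⟨p, hp, by tauto⟩
  loopless := ⟨fun v h => h.1 rfl⟩

/-- A `d`-clique lift of `G`: a choice `M v ⊆ N(v)` with `|M v| ≤ d` for each vertex `v`. -/
structure CliqueLift (G : SimpleGraph V) (d : ℕ) where
  M : V → Set V
  subset_nbhd : ∀ v, M v ⊆ G.neighborSet v
  finite : ∀ v, (M v).Finite
  card_le : ∀ v, (M v).ncard ≤ d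

/-- The graph `G^ℳ` obtained from `G` by adding the edge `uw` whenever there is a vertex `v`
with `u ∈ M v` and `w ∈ N(v)`. -/
def cliqueLiftGraph (G : SimpleGraph V) {d : ℕ} (ℳ : CliqueLift G d) : SimpleGraph V where
  Adj u w := u ≠ w ∧ (G.Adj u w ∨ ∃ v, (u ∈ ℳ.M v ∧ w ∈ G.neighborSet v) ∨
    (w ∈ ℳ.M v ∧ u ∈ G.neighborSet v))
  symm := by
    constructor
    rintro u w ⟨h, h'⟩
    refine ⟨h.symm, ?_⟩
    rcases h' with h' | ⟨v, h'⟩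
    · exact Or.inl h'.symm
    · exact Or.inr ⟨v, by tauto⟩
  loopless := ⟨fun v h => h.1 rfl⟩

/-- The `m × m` grid graph. -/
def gridGraph (m : ℕ) : SimpleGraph (Fin m × Fin m) where
  Adj a b := |(a.1 : ℤ) - b.1| + |(a.2 : ℤ) - b.2| = 1
  symm := by
    constructor
    intro a b h
    rw [abs_sub_comm ((b.1 : ℤ)), abs_sub_comm ((b.2 : ℤ))]
    exact h
  loopless := by constructor; intro a h; simp at h

/-! Model the vertex `v` of `G^ℳ` by a star centred at `(v, 0)` containing, for every `u` with
`v ∈ M u`, a private copy of `u`: the `|M u| ≤ d` members of `M u` get distinct nonzero layers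
of `K̄_{d+1}`, which makes the stars disjoint, and each copy is adjacent to `(v, 0)` as `u ∈ N(v)`.
An edge `xw` of `G^ℳ` coming from `x ∈ M u`, `w ∈ N(u)` joins the copy of `u` in the star of `x`
to the centre `(w, 0)`. -/

namespace SimpleGraph

variable {G : SimpleGraph V}

theorem lexProd_bot_adj {a b : V × W} : (lexProd G ⊥).Adj a b ↔ G.Adj a.1 b.1 := by
  simp [lexProd]

section Star

variable {s : Set V} {c : V}

theorem induce_connected_of_adj_center (hc : c ∈ s) (hadj : ∀ x ∈ s, x ≠ c → G.Adj c x) :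
    (G.induce s).Connected := by
  have hreach : ∀ x : s, (G.induce s).Reachable ⟨c, hc⟩ x := by
    rintro ⟨x, hx⟩
    by_cases hxc : x = c
    · subst hxc; rfl
    · exact Adj.reachable (G := G.induce s) (hadj x hx hxc)
  have : Nonempty s := ⟨⟨c, hc⟩⟩
  exact ⟨fun x y => (hreach x).symm.trans (hreach y)⟩

theorem induce_dist_center_le_one (hc : c ∈ s) (hadj : ∀ x ∈ s, x ≠ c → G.Adj c x) (x : s) :
    (G.induce s).dist ⟨c, hc⟩ x ≤ 1 := by
  obtain ⟨x, hx⟩ := x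
  by_cases hxc : x = c
  · subst hxc; simp
  · exact (dist_eq_one_iff_adj.mpr (show (G.induce s).Adj ⟨c, hc⟩ ⟨x, hx⟩ from hadj x hx hxc)).le

end Star

theorem isShallowMinorModel_one_of_centers {H : SimpleGraph W} {μ : W → Set V} (c : W → V)
    (hc : ∀ w, c w ∈ μ w) (hadj : ∀ w, ∀ x ∈ μ w, x ≠ c w → G.Adj (c w) x)
    (hdisj : Pairwise fun w w' => Disjoint (μ w) (μ w'))
    (hedge : ∀ ⦃w w'⦄, H.Adj w w' → ∃ u ∈ μ w, ∃ v ∈ μ w', G.Adj u v) :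
    IsShallowMinorModel H G 1 μ :=
  ⟨fun w => induce_connected_of_adj_center (hc w) (hadj w),
    fun w => ⟨⟨c w, hc w⟩, induce_dist_center_le_one (hc w) (hadj w)⟩, hdisj, hedge⟩

end SimpleGraph

theorem Set.nonempty_embedding_fin_of_ncard_le {α : Type*} {s : Set α} {d : ℕ} (hs : s.Finite)
    (hd : s.ncard ≤ d) : Nonempty (s ↪ Fin d) := by
  have := hs.fintype
  refine Function.Embedding.nonempty_of_card_le ?_
  rwa [Fintype.card_fin, ← Nat.card_eq_fintype_card, Nat.card_coe_set_eq]

namespace CliqueLift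

variable {G : SimpleGraph V} {d : ℕ} (ℳ : CliqueLift G d)

noncomputable def label (u : V) : ℳ.M u ↪ Fin d :=
  (Set.nonempty_embedding_fin_of_ncard_le (ℳ.finite u) (ℳ.card_le u)).some

/-- Layer `0` holds the centres; `(u, i + 1)` is the copy of `u` in the branch set of the member
of `M u` labelled `i`. -/
def branchSet (v : V) : Set (V × Fin (d + 1)) :=
  insert (v, 0) {x | ∃ (u : V) (h : v ∈ ℳ.M u), x = (u, (ℳ.label u ⟨v, h⟩).succ)}

theorem center_mem_branchSet (v : V) : (v, 0) ∈ ℳ.branchSet v :=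
  Set.mem_insert _ _

theorem mem_branchSet_of_mem {u v : V} (h : v ∈ ℳ.M u) :
    (u, (ℳ.label u ⟨v, h⟩).succ) ∈ ℳ.branchSet v :=
  Or.inr ⟨u, h, rfl⟩

theorem lexProd_adj_center {v : V} {x : V × Fin (d + 1)} (hx : x ∈ ℳ.branchSet v)
    (hxv : x ≠ (v, 0)) : (lexProd G ⊥).Adj (v, 0) x := by
  rcases hx with hx | ⟨u, hu, rfl⟩
  · exact absurd hx hxv
  · exact SimpleGraph.lexProd_bot_adj.mpr (ℳ.subset_nbhd u hu).symm

theorem eq_of_mem_branchSet {v v' : V} {x : V × Fin (d + 1)} (hx : x ∈ ℳ.branchSet v)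
    (hx' : x ∈ ℳ.branchSet v') : v = v' := by
  rcases hx with rfl | ⟨u, hu, rfl⟩ <;> rcases hx' with hx' | ⟨u', hu', hx'⟩
  · exact (Prod.mk.inj hx').1
  · exact absurd (Prod.mk.inj hx').2 (Fin.succ_ne_zero _).symm
  · exact absurd (Prod.mk.inj hx').2 (Fin.succ_ne_zero _)
  · obtain ⟨rfl, hlabel⟩ := Prod.mk.inj hx'
    exact congrArg Subtype.val ((ℳ.label u).injective (Fin.succ_injective _ hlabel))

theorem pairwise_disjoint_branchSet :
    Pairwise fun v v' => Disjoint (ℳ.branchSet v) (ℳ.branchSet v') :=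
  fun _ _ hne => Set.disjoint_left.mpr fun _ hx hx' => hne (ℳ.eq_of_mem_branchSet hx hx')

theorem exists_adj_of_cliqueLiftGraph_adj {u w : V} (h : (cliqueLiftGraph G ℳ).Adj u w) :
    ∃ x ∈ ℳ.branchSet u, ∃ y ∈ ℳ.branchSet w, (lexProd G ⊥).Adj x y := by
  obtain ⟨-, huw | ⟨v, ⟨hu, hw⟩ | ⟨hw, hu⟩⟩⟩ := h
  · exact ⟨_, ℳ.center_mem_branchSet u, _, ℳ.center_mem_branchSet w, Or.inl huw⟩
  · exact ⟨_, ℳ.mem_branchSet_of_mem hu, _, ℳ.center_mem_branchSet w, Or.inl hw⟩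
  · exact ⟨_, ℳ.center_mem_branchSet u, _, ℳ.mem_branchSet_of_mem hw, Or.inl (G.adj_symm hu)⟩

end CliqueLift

/-- For every graph `G` with a `d`-clique lift `ℳ`, the graph `G^ℳ` is a
`1`-shallow minor of `G ∘ K̄_{d+1}`. -/
theorem cliqueLift_shallowMinor {V : Type} (G : SimpleGraph V) (d : ℕ)
    (ℳ : CliqueLift G d) :
    ShallowMinor (cliqueLiftGraph G ℳ) (lexProd G (⊥ : SimpleGraph (Fin (d + 1)))) 1 :=
  ⟨ℳ.branchSet, SimpleGraph.isShallowMinorModel_one_of_centers (fun v => (v, 0))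
    ℳ.center_mem_branchSet (fun _ _ hx hxv => ℳ.lexProd_adj_center hx hxv)
    ℳ.pairwise_disjoint_branchSet (fun _ _ => ℳ.exists_adj_of_cliqueLiftGraph_adj)⟩
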